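/- arXiv:2002.03820 — 3 statements merged into one kernel-verified Lean document; each statement's English description precedes it below -/
import Mathlib

section
/- Let A : ℂ^N → ℂ^m and E : ℂ^N → ℂ^M be linear maps between finite-dimensional complex inner product spaces, λ > 0, z ∈ ℂ^M, and for y ∈ ℂ^m define G_y(x) = (1/2)‖A x − y‖² + (λ/2)‖E x − z‖². Let y, y' ∈ ℂ^m, let x* be a global minimizer of G_y and x' a global minimizer of G_{y'}. Then G_y(x') ≤ 4 G_y(x*) + 3‖y − y'‖². -/
/-!
Comparing the two data terms through `y'` costs a factor `2` and one `‖y - y'‖²`: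
`G_y ≤ 2 G_{y'} + ‖y - y'‖²` pointwise, and symmetrically. Chaining
`G_y(x') ≤ 2 G_{y'}(x') + ‖y - y'‖² ≤ 2 G_{y'}(x) + ‖y - y'‖² ≤ 4 G_y(x) + 3 ‖y - y'‖²`,
where the middle step is minimality of `x'`, gives the bound for every `x`, in particular `x*`.
-/

lemma norm_sub_sq_le_two_mul {V : Type*} [SeminormedAddCommGroup V] (a b c : V) :
    ‖a - c‖ ^ 2 ≤ 2 * (‖a - b‖ ^ 2 + ‖b - c‖ ^ 2) :=
  calc ‖a - c‖ ^ 2 ≤ (‖a - b‖ + ‖b - c‖) ^ 2 := by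
        gcongr; exact norm_sub_le_norm_sub_add_norm_sub a b c
    _ ≤ 2 * (‖a - b‖ ^ 2 + ‖b - c‖ ^ 2) := add_sq_le

section DataFidelity

variable {X V W : Type*} [SeminormedAddCommGroup V] [SeminormedAddCommGroup W]

noncomputable def dataFidelity (A : X → V) (E : X → W) (lam : ℝ) (z : W) (y : V) (x : X) : ℝ :=
  (1 / 2) * ‖A x - y‖ ^ 2 + (lam / 2) * ‖E x - z‖ ^ 2

lemma dataFidelity_le_two_mul_add (A : X → V) (E : X → W) {lam : ℝ} (hlam : 0 ≤ lam) (z : W)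
    (y y' : V) (x : X) :
    dataFidelity A E lam z y x ≤ 2 * dataFidelity A E lam z y' x + ‖y - y'‖ ^ 2 := by
  have hdata := norm_sub_sq_le_two_mul (A x) y' y
  have hreg : 0 ≤ lam * ‖E x - z‖ ^ 2 := by positivity
  rw [norm_sub_rev y' y] at hdata
  unfold dataFidelity
  linarith

lemma dataFidelity_minimizer_le (A : X → V) (E : X → W) {lam : ℝ} (hlam : 0 ≤ lam) (z : W)
    (y y' : V) {x' : X} (hx' : ∀ x, dataFidelity A E lam z y' x' ≤ dataFidelity A E lam z y' x)
    (x : X) :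
    dataFidelity A E lam z y x' ≤ 4 * dataFidelity A E lam z y x + 3 * ‖y - y'‖ ^ 2 := by
  have hleft := dataFidelity_le_two_mul_add A E hlam z y y' x'
  have hright := dataFidelity_le_two_mul_add A E hlam z y' y x
  rw [norm_sub_rev y' y] at hright
  linarith [hx' x]

end DataFidelity

theorem stmt_10_general (N m M : ℕ)
    (A : EuclideanSpace ℂ (Fin N) →ₗ[ℂ] EuclideanSpace ℂ (Fin m))
    (E : EuclideanSpace ℂ (Fin N) →ₗ[ℂ] EuclideanSpace ℂ (Fin M))
    (lam : ℝ) (hlam : 0 < lam)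
    (z : EuclideanSpace ℂ (Fin M))
    (G : EuclideanSpace ℂ (Fin m) → EuclideanSpace ℂ (Fin N) → ℝ)
    (hG : ∀ y x, G y x = (1 / 2) * ‖A x - y‖ ^ 2 + (lam / 2) * ‖E x - z‖ ^ 2)
    (y y' : EuclideanSpace ℂ (Fin m))
    (xstar x' : EuclideanSpace ℂ (Fin N))
    (hx' : ∀ x, G y' x' ≤ G y' x) :
    G y x' ≤ 4 * G y xstar + 3 * ‖y - y'‖ ^ 2 := by
  obtain rfl : G = dataFidelity A E lam z := funext₂ hG
  exact dataFidelity_minimizer_le A E hlam.le z y y' hx' xstar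

/-- Quantitative stability bound: if `x*` minimizes `G_y` and `x'` minimizes `G_{y'}`,
then `G_y(x') ≤ 4 G_y(x*) + 3‖y − y'‖²`. -/
theorem stmt_10 (N m M : ℕ)
    (A : EuclideanSpace ℂ (Fin N) →ₗ[ℂ] EuclideanSpace ℂ (Fin m))
    (E : EuclideanSpace ℂ (Fin N) →ₗ[ℂ] EuclideanSpace ℂ (Fin M))
    (lam : ℝ) (hlam : 0 < lam)
    (z : EuclideanSpace ℂ (Fin M))
    (G : EuclideanSpace ℂ (Fin m) → EuclideanSpace ℂ (Fin N) → ℝ)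
    (hG : ∀ y x, G y x = (1 / 2) * ‖A x - y‖ ^ 2 + (lam / 2) * ‖E x - z‖ ^ 2)
    (y y' : EuclideanSpace ℂ (Fin m))
    (xstar x' : EuclideanSpace ℂ (Fin N))
    (hxstar : ∀ x, G y xstar ≤ G y x)
    (hx' : ∀ x, G y' x' ≤ G y' x) :
    G y x' ≤ 4 * G y xstar + 3 * ‖y - y'‖ ^ 2 :=
  stmt_10_general N m M A E lam hlam z G hG y y' xstar x' hx'
end

section
/- Let A : ℂ^N → ℂ^m and E : ℂ^N → ℂ^M be linear maps between finite-dimensional complex inner product spaces with ker A ∩ ker E = {0}, λ > 0, z ∈ ℂ^M, and for y ∈ ℂ^m define G_y(x) = (1/2)‖A x − y‖² + (λ/2)‖E x − z‖². Let y ∈ ℂ^m, let (y_ℓ) be a sequence in ℂ^m converging to y, and for each ℓ let x_ℓ be a global minimizer of G_{y_ℓ}. Then the sequence (x_ℓ) is bounded; in particular it has a convergent subsequence. -/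
/-!
Comparing a minimizer `x_ℓ` of `G_{y_ℓ}` with `x = 0` bounds `‖A x_ℓ - y_ℓ‖² + λ ‖E x_ℓ - z‖²`
by `‖y_ℓ‖² + λ ‖z‖²`, which is bounded because `y_ℓ` converges. Hence `A x_ℓ` and `E x_ℓ` stay
bounded. Since `ker A ⊓ ker E = ⊥`, the stacked map `x ↦ (A x, E x)` is injective on a
finite-dimensional space, hence anti-Lipschitz, so `x_ℓ` itself is bounded, and Bolzano–Weierstrass
gives the convergent subsequence.
-/

open Filter Bornology Set Metric

section

variable {ι : Type*}

lemma isBounded_range_of_sq_norm_le {E : Type*} [SeminormedAddCommGroup E] {u : ι → E} {C : ℝ}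
    (h : ∀ i, ‖u i‖ ^ 2 ≤ C) : IsBounded (range u) :=
  isBounded_iff_forall_norm_le.2 ⟨√C, forall_mem_range.2 fun i => Real.le_sqrt_of_sq_le (h i)⟩

lemma isBounded_range_of_sq_norm_add_mul_sq_norm_le {Y Z : Type*} [SeminormedAddCommGroup Y]
    [SeminormedAddCommGroup Z] {u : ι → Y} {v : ι → Z} {lam C : ℝ} (hlam : 0 < lam)
    (h : ∀ i, ‖u i‖ ^ 2 + lam * ‖v i‖ ^ 2 ≤ C) : IsBounded (range u) ∧ IsBounded (range v) :=
  ⟨isBounded_range_of_sq_norm_le (C := C) fun i => by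
      linarith [h i, mul_nonneg hlam.le (sq_nonneg ‖v i‖)],
    isBounded_range_of_sq_norm_le (C := C / lam) fun i => by
      rw [le_div_iff₀' hlam]; linarith [h i, sq_nonneg ‖u i‖]⟩

lemma isBounded_range_of_isBounded_range_sub {E : Type*} [SeminormedAddCommGroup E]
    {u v : ι → E} (huv : IsBounded (range (u - v))) (hv : IsBounded (range v)) :
    IsBounded (range u) :=
  (isBounded_add huv hv).subset <| range_subset_iff.2 fun i =>
    ⟨_, mem_range_self i, _, mem_range_self i, sub_add_cancel _ _⟩

theorem LinearMap.isBounded_range_of_ker_inf_ker_eq_bot {𝕜 X Y Z : Type*}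
    [NontriviallyNormedField 𝕜] [CompleteSpace 𝕜]
    [NormedAddCommGroup X] [NormedSpace 𝕜 X] [FiniteDimensional 𝕜 X]
    [NormedAddCommGroup Y] [NormedSpace 𝕜 Y] [NormedAddCommGroup Z] [NormedSpace 𝕜 Z]
    (A : X →ₗ[𝕜] Y) (E : X →ₗ[𝕜] Z) (hker : ker A ⊓ ker E = ⊥) {x : ι → X}
    (hA : IsBounded (Set.range (A ∘ x))) (hE : IsBounded (Set.range (E ∘ x))) :
    IsBounded (Set.range x) := by
  obtain ⟨K, -, hK⟩ := (A.prod E).exists_antilipschitzWith (by rw [ker_prod, hker])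
  exact (hK.isBounded_preimage (hA.prod hE)).subset <|
    Set.range_subset_iff.2 fun i => ⟨Set.mem_range_self i, Set.mem_range_self i⟩

end

/-- If `ker A ⊓ ker E = ⊥` and `y_ℓ → y`, then any sequence of global minimizers
`x_ℓ` of `G_{y_ℓ}` is bounded; in particular it has a convergent subsequence. -/
theorem stmt_11 (N m M : ℕ)
    (A : EuclideanSpace ℂ (Fin N) →ₗ[ℂ] EuclideanSpace ℂ (Fin m))
    (E : EuclideanSpace ℂ (Fin N) →ₗ[ℂ] EuclideanSpace ℂ (Fin M))
    (hker : LinearMap.ker A ⊓ LinearMap.ker E = ⊥)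
    (lam : ℝ) (hlam : 0 < lam)
    (z : EuclideanSpace ℂ (Fin M))
    (G : EuclideanSpace ℂ (Fin m) → EuclideanSpace ℂ (Fin N) → ℝ)
    (hG : ∀ y x, G y x = (1 / 2) * ‖A x - y‖ ^ 2 + (lam / 2) * ‖E x - z‖ ^ 2)
    (y : EuclideanSpace ℂ (Fin m)) (ys : ℕ → EuclideanSpace ℂ (Fin m))
    (hys : Filter.Tendsto ys Filter.atTop (nhds y))
    (xs : ℕ → EuclideanSpace ℂ (Fin N))
    (hxs : ∀ ℓ, ∀ x, G (ys ℓ) (xs ℓ) ≤ G (ys ℓ) x) :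
    (∃ C : ℝ, ∀ ℓ, ‖xs ℓ‖ ≤ C) ∧
      ∃ (τ : ℕ → ℕ) (xhat : EuclideanSpace ℂ (Fin N)), StrictMono τ ∧
        Filter.Tendsto (xs ∘ τ) Filter.atTop (nhds xhat) := by
  have hys_bdd := isBounded_range_of_tendsto ys hys
  obtain ⟨B, hB⟩ := isBounded_iff_forall_norm_le.1 hys_bdd
  have henergy : ∀ ℓ, ‖(A ∘ xs - ys) ℓ‖ ^ 2 + lam * ‖(E ∘ xs - Function.const ℕ z) ℓ‖ ^ 2 ≤
      B ^ 2 + lam * ‖z‖ ^ 2 := by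
    intro ℓ
    have hzero := hxs ℓ 0
    simp only [hG, map_zero, zero_sub, norm_neg] at hzero
    have hyB := pow_le_pow_left₀ (norm_nonneg _) (hB _ (mem_range_self ℓ)) 2
    simp only [Pi.sub_apply, Function.comp_apply, Function.const_apply]
    linarith
  obtain ⟨hresA, hresE⟩ := isBounded_range_of_sq_norm_add_mul_sq_norm_le hlam henergy
  have hxs_bdd : IsBounded (range xs) := A.isBounded_range_of_ker_inf_ker_eq_bot E hker
    (isBounded_range_of_isBounded_range_sub hresA hys_bdd)
    (isBounded_range_of_isBounded_range_sub hresE (isBounded_singleton.subset range_const_subset))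
  obtain ⟨C, hC⟩ := isBounded_iff_forall_norm_le.1 hxs_bdd
  obtain ⟨xhat, -, τ, hτ, hlim⟩ := tendsto_subseq_of_bounded hxs_bdd (mem_range_self ·)
  exact ⟨⟨C, fun ℓ => hC _ (mem_range_self ℓ)⟩, τ, xhat, hτ, hlim⟩
end

section
/- Let A : ℂ^N → ℂ^m and E : ℂ^N → ℂ^M be linear maps between finite-dimensional complex inner product spaces with ker A ∩ ker E = {0}, λ > 0, z ∈ ℂ^M, and for y ∈ ℂ^m define G_y(x) = (1/2)‖A x − y‖² + (λ/2)‖E x − z‖². Let y ∈ ℂ^m and let (y_ℓ) be a sequence in ℂ^m converging to y, and for each ℓ let x_ℓ be a global minimizer of G_{y_ℓ}. Then (x_ℓ) has at least one convergent subsequence, and every accumulation point of (x_ℓ) is a global minimizer of G_y; that is, the solution map y ↦ argmin G_y is stable. -/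
/-!
Comparing a minimizer `x` of `G_y` with the competitor `0` gives
`‖A x - y‖² + λ‖E x - z‖² ≤ ‖y‖² + λ‖z‖²`, so `A x` and `E x` are bounded in terms of `‖y‖`.
Since `x ↦ (A x, E x)` is injective on a finite-dimensional space it is antilipschitz, hence the
minimizers `x_ℓ` of `G_{y_ℓ}` stay bounded and Bolzano–Weierstrass yields a convergent
subsequence. Every limit point minimizes `G_y` because `(y, x) ↦ G_y(x)` is jointly continuous
and minimality passes to the limit.
-/

open Filter Topology Bornology NNReal

theorem forall_le_of_tendsto_of_forall_le {ι α β γ : Type*} [TopologicalSpace α]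
    [TopologicalSpace β] [TopologicalSpace γ] [Preorder γ] [OrderClosedTopology γ]
    {f : α → β → γ} (hf : Continuous (Function.uncurry f)) {l : Filter ι} [l.NeBot]
    {ys : ι → α} {xs : ι → β} {y : α} {xhat : β} (hy : Tendsto ys l (𝓝 y))
    (hx : Tendsto xs l (𝓝 xhat)) (hmin : ∀ i x, f (ys i) (xs i) ≤ f (ys i) x) (x : β) :
    f y xhat ≤ f y x :=
  le_of_tendsto_of_tendsto' ((hf.tendsto (y, xhat)).comp (hy.prodMk_nhds hx))
    ((hf.tendsto (y, x)).comp (hy.prodMk_nhds tendsto_const_nhds)) fun i ↦ hmin i x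

theorem LinearMap.exists_norm_le_mul_max_of_ker_inf_ker_eq_bot {𝕜 X Y Z : Type*}
    [NontriviallyNormedField 𝕜] [CompleteSpace 𝕜] [NormedAddCommGroup X] [NormedSpace 𝕜 X]
    [FiniteDimensional 𝕜 X] [NormedAddCommGroup Y] [NormedSpace 𝕜 Y] [NormedAddCommGroup Z]
    [NormedSpace 𝕜 Z] {A : X →ₗ[𝕜] Y} {E : X →ₗ[𝕜] Z} (hker : ker A ⊓ ker E = ⊥) :
    ∃ K : ℝ≥0, ∀ x, ‖x‖ ≤ K * max ‖A x‖ ‖E x‖ := by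
  obtain ⟨K, -, hK⟩ := (A.prod E).exists_antilipschitzWith (by rwa [ker_prod])
  refine ⟨K, fun x ↦ ?_⟩
  simpa [Prod.dist_eq] using hK.le_mul_dist x 0

section Tikhonov

variable {𝕜 X Y Z : Type*} [NontriviallyNormedField 𝕜] [NormedAddCommGroup X] [NormedSpace 𝕜 X]
  [NormedAddCommGroup Y] [NormedSpace 𝕜 Y] [NormedAddCommGroup Z] [NormedSpace 𝕜 Z]

/-- `tikhonov A E lam z y` is the functional `G_y`. -/
noncomputable def tikhonov (A : X →ₗ[𝕜] Y) (E : X →ₗ[𝕜] Z) (lam : ℝ) (z : Z) (y : Y) (x : X) :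
    ℝ :=
  1 / 2 * ‖A x - y‖ ^ 2 + lam / 2 * ‖E x - z‖ ^ 2

variable {A : X →ₗ[𝕜] Y} {E : X →ₗ[𝕜] Z} {lam : ℝ} {z : Z}

theorem continuous_uncurry_tikhonov [CompleteSpace 𝕜] [FiniteDimensional 𝕜 X] :
    Continuous (Function.uncurry (tikhonov A E lam z)) := by
  have hA := A.continuous_of_finiteDimensional
  have hE := E.continuous_of_finiteDimensional
  unfold tikhonov Function.uncurry
  fun_prop

theorem sq_norm_sub_add_le_of_tikhonov_le {y : Y} {x : X}
    (hmin : ∀ x', tikhonov A E lam z y x ≤ tikhonov A E lam z y x') :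
    ‖A x - y‖ ^ 2 + lam * ‖E x - z‖ ^ 2 ≤ ‖y‖ ^ 2 + lam * ‖z‖ ^ 2 := by
  have h := hmin 0
  simp only [tikhonov, map_zero, zero_sub, norm_neg] at h
  linarith

theorem norm_map_le_of_tikhonov_le (hlam : 0 < lam) {y : Y} {x : X}
    (hmin : ∀ x', tikhonov A E lam z y x ≤ tikhonov A E lam z y x') :
    ‖A x‖ ≤ 2 * ‖y‖ + √lam * ‖z‖ ∧ ‖E x‖ ≤ ‖y‖ / √lam + 2 * ‖z‖ := by
  have hsq := sq_norm_sub_add_le_of_tikhonov_le hmin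
  have hs : 0 < √lam := Real.sqrt_pos.2 hlam
  have hlam_eq : lam = √lam ^ 2 := (Real.sq_sqrt hlam.le).symm
  have hrhs_le_sq : ‖y‖ ^ 2 + lam * ‖z‖ ^ 2 ≤ (‖y‖ + √lam * ‖z‖) ^ 2 := by
    rw [add_sq, mul_pow, ← hlam_eq]
    have : 0 ≤ 2 * ‖y‖ * (√lam * ‖z‖) := by positivity
    linarith
  have hAx : ‖A x - y‖ ≤ ‖y‖ + √lam * ‖z‖ := by
    refine (pow_le_pow_iff_left₀ (norm_nonneg _) (by positivity) two_ne_zero).1 ?_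
    nlinarith [mul_nonneg hlam.le (sq_nonneg ‖E x - z‖)]
  have hEx : √lam * ‖E x - z‖ ≤ ‖y‖ + √lam * ‖z‖ := by
    refine (pow_le_pow_iff_left₀ (by positivity) (by positivity) two_ne_zero).1 ?_
    rw [mul_pow, ← hlam_eq]
    nlinarith [sq_nonneg ‖A x - y‖]
  constructor
  · calc ‖A x‖ ≤ ‖A x - y‖ + ‖y‖ := norm_le_norm_sub_add _ _
      _ ≤ 2 * ‖y‖ + √lam * ‖z‖ := by linarith
  · calc ‖E x‖ ≤ ‖E x - z‖ + ‖z‖ := norm_le_norm_sub_add _ _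
      _ ≤ (‖y‖ + √lam * ‖z‖) / √lam + ‖z‖ := by
          gcongr
          rwa [le_div_iff₀ hs, mul_comm]
      _ = ‖y‖ / √lam + 2 * ‖z‖ := by field_simp; ring

theorem isBounded_range_of_forall_tikhonov_le [CompleteSpace 𝕜] [FiniteDimensional 𝕜 X]
    (hker : LinearMap.ker A ⊓ LinearMap.ker E = ⊥) (hlam : 0 < lam) {ys : ℕ → Y} {xs : ℕ → X}
    (hys : IsBounded (Set.range ys))
    (hmin : ∀ n x, tikhonov A E lam z (ys n) (xs n) ≤ tikhonov A E lam z (ys n) x) :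
    IsBounded (Set.range xs) := by
  obtain ⟨K, hK⟩ := LinearMap.exists_norm_le_mul_max_of_ker_inf_ker_eq_bot hker
  obtain ⟨C, hC⟩ := hys.exists_norm_le
  refine isBounded_iff_forall_norm_le.2
    ⟨K * max (2 * C + √lam * ‖z‖) (C / √lam + 2 * ‖z‖), ?_⟩
  rintro _ ⟨n, rfl⟩
  have hCn : ‖ys n‖ ≤ C := hC _ ⟨n, rfl⟩
  obtain ⟨hA, hE⟩ := norm_map_le_of_tikhonov_le hlam (hmin n)
  calc ‖xs n‖ ≤ K * max ‖A (xs n)‖ ‖E (xs n)‖ := hK _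
    _ ≤ K * max (2 * C + √lam * ‖z‖) (C / √lam + 2 * ‖z‖) := by
        gcongr
        · exact hA.trans (by gcongr)
        · exact hE.trans (by gcongr)

end Tikhonov

/-- Stability of the solution map `y ↦ argmin G_y`: if `ker A ⊓ ker E = ⊥` and
`y_ℓ → y`, then any sequence of minimizers `x_ℓ` of `G_{y_ℓ}` has a convergent
subsequence, and every accumulation point of `(x_ℓ)` is a global minimizer of `G_y`. -/
theorem stmt_13 (N m M : ℕ)
    (A : EuclideanSpace ℂ (Fin N) →ₗ[ℂ] EuclideanSpace ℂ (Fin m))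
    (E : EuclideanSpace ℂ (Fin N) →ₗ[ℂ] EuclideanSpace ℂ (Fin M))
    (hker : LinearMap.ker A ⊓ LinearMap.ker E = ⊥)
    (lam : ℝ) (hlam : 0 < lam)
    (z : EuclideanSpace ℂ (Fin M))
    (G : EuclideanSpace ℂ (Fin m) → EuclideanSpace ℂ (Fin N) → ℝ)
    (hG : ∀ y x, G y x = (1 / 2) * ‖A x - y‖ ^ 2 + (lam / 2) * ‖E x - z‖ ^ 2)
    (y : EuclideanSpace ℂ (Fin m)) (ys : ℕ → EuclideanSpace ℂ (Fin m))
    (hys : Filter.Tendsto ys Filter.atTop (nhds y))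
    (xs : ℕ → EuclideanSpace ℂ (Fin N))
    (hxs : ∀ ℓ, ∀ x, G (ys ℓ) (xs ℓ) ≤ G (ys ℓ) x) :
    (∃ (τ : ℕ → ℕ) (xhat : EuclideanSpace ℂ (Fin N)), StrictMono τ ∧
        Filter.Tendsto (xs ∘ τ) Filter.atTop (nhds xhat)) ∧
      ∀ (τ : ℕ → ℕ) (xhat : EuclideanSpace ℂ (Fin N)), StrictMono τ →
        Filter.Tendsto (xs ∘ τ) Filter.atTop (nhds xhat) →
        ∀ x, G y xhat ≤ G y x := by
  obtain rfl : G = tikhonov A E lam z := funext₂ hG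
  constructor
  · have hbdd := isBounded_range_of_forall_tikhonov_le hker hlam
      (Metric.isBounded_range_of_tendsto ys hys) hxs
    obtain ⟨xhat, -, τ, hτ, hconv⟩ := tendsto_subseq_of_bounded hbdd (Set.mem_range_self ·)
    exact ⟨τ, xhat, hτ, hconv⟩
  · intro τ xhat hτ hconv
    exact forall_le_of_tendsto_of_forall_le continuous_uncurry_tikhonov
      (hys.comp hτ.tendsto_atTop) hconv fun ℓ ↦ hxs (τ ℓ)
end
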